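/- arXiv:1612.00556 — 3 statements merged into one kernel-verified Lean document; each statement's English description precedes it below -/
import Mathlib

section
/- Let R be an integral domain with fraction field K, and let S = R[x_1,...,x_k]/I be a finitely presented R-algebra such that K ⊗_R S is isomorphic as a K-algebra to the polynomial ring K[t]. Then there exists a nonzero f ∈ R such that R_f ⊗_R S is isomorphic as an R_f-algebra to R_f[t]. -/
open scoped TensorProduct
open Polynomial

lemma ringHom_ring_inverse {A B : Type*} [CommRing A] [CommRing B] (g : A →+* B) {x : A}
    (hx : IsUnit x) : g (Ring.inverse x) = Ring.inverse (g x) := by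
  obtain ⟨u, rfl⟩ := hx
  rw [show g ↑u = ↑(Units.map (g : A →* B) u) from rfl, Ring.inverse_unit, Ring.inverse_unit,
    ← map_inv]
  rfl

noncomputable def awayAlgHom {R : Type*} [CommSemiring R] (f : R) {B : Type*} [CommSemiring B]
    [Algebra R B] (h : IsUnit (algebraMap R B f)) : Localization.Away f →ₐ[R] B :=
  AlgHom.mk' (Localization.awayLift (algebraMap R B) f h) (fun c x => by
    rw [Algebra.smul_def, map_mul, IsLocalization.Away.lift_eq, Algebra.smul_def])

@[simp] lemma awayAlgHom_algebraMap {R : Type*} [CommSemiring R] (f : R) {B : Type*}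
    [CommSemiring B] [Algebra R B] (h : IsUnit (algebraMap R B f)) (r : R) :
    awayAlgHom f h (algebraMap R (Localization.Away f) r) = algebraMap R B r :=
  IsLocalization.Away.lift_eq f h r

lemma awayAlgHom_injective {R : Type*} [CommRing R] (f : R)
    {B : Type*} [CommRing B] [Algebra R B] (h : IsUnit (algebraMap R B f))
    (hB : Function.Injective (algebraMap R B)) :
    Function.Injective (awayAlgHom f h) := by
  refine (injective_iff_map_eq_zero _).mpr fun x hx => ?_
  obtain ⟨⟨r, m⟩, hm⟩ := IsLocalization.surj (Submonoid.powers f) x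
  have h1 : awayAlgHom f h (algebraMap R (Localization.Away f) r) = 0 := by
    rw [← hm, map_mul, hx, zero_mul]
  rw [awayAlgHom_algebraMap] at h1
  have hr : r = 0 := hB (by simpa using h1)
  have hmu : IsUnit (algebraMap R (Localization.Away f) (m : R)) := by
    obtain ⟨k, hk⟩ := m.2
    rw [← hk, map_pow]
    exact (IsLocalization.Away.algebraMap_isUnit f).pow k
  have := hm
  rw [hr, map_zero] at this
  exact (hmu.mul_left_eq_zero).mp this

lemma smul_eq_zero_of_isUnit_algebraMap {R A M : Type*} [CommSemiring R] [CommSemiring A]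
    [Algebra R A] [AddCommMonoid M] [Module R M] [Module A M] [IsScalarTower R A M]
    {r : R} (hr : IsUnit (algebraMap R A r)) {v : M} (h : r • v = 0) : v = 0 := by
  have h' : algebraMap R A r • v = 0 := by rw [algebraMap_smul]; exact h
  calc v = (Ring.inverse (algebraMap R A r) * algebraMap R A r) • v := by
          rw [Ring.inverse_mul_cancel _ hr, one_smul]
    _ = Ring.inverse (algebraMap R A r) • (algebraMap R A r • v) := by rw [mul_smul]
    _ = 0 := by rw [h', smul_zero]

set_option maxHeartbeats 1000000 in
/-- Let `R` be an integral domain with fraction field `K` and `S` a finitely presented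
`R`-algebra such that `K ⊗[R] S ≅ K[t]` as `K`-algebras. Then there is a nonzero
`f ∈ R` such that `R_f ⊗[R] S ≅ R_f[t]` as `R_f`-algebras. -/
theorem stmt_11 (R : Type*) [CommRing R] [IsDomain R]
    (S : Type*) [CommRing S] [Algebra R S]
    (hfp : Algebra.FinitePresentation R S)
    (h : Nonempty ((FractionRing R ⊗[R] S) ≃ₐ[FractionRing R]
          Polynomial (FractionRing R))) :
    ∃ f : R, f ≠ 0 ∧
      Nonempty ((Localization.Away f ⊗[R] S) ≃ₐ[Localization.Away f]
        Polynomial (Localization.Away f)) := by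
  classical
  obtain ⟨e⟩ := h
  obtain ⟨n, φ, hφ, -⟩ := hfp
  haveI hKS : IsLocalizedModule (nonZeroDivisors R)
      (TensorProduct.mk R (FractionRing R) S 1) :=
    (isLocalizedModule_iff_isBaseChange (nonZeroDivisors R) (FractionRing R) _).mpr
      (TensorProduct.isBaseChange R S (FractionRing R))
  obtain ⟨⟨s₀, b₂⟩, hs₀⟩ := IsLocalizedModule.surj (nonZeroDivisors R)
    (TensorProduct.mk R (FractionRing R) S 1) (e.symm X)
  have hs₀' : (b₂ : R) • e.symm (X : Polynomial (FractionRing R)) =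
      (1 : FractionRing R) ⊗ₜ[R] s₀ := by
    simpa [Submonoid.smul_def] using hs₀
  set p : Fin n → Polynomial (FractionRing R) :=
    fun i => e ((1 : FractionRing R) ⊗ₜ[R] φ (MvPolynomial.X i)) with hp
  choose bb hbb using fun i : Fin n =>
    IsLocalization.integerNormalization_map_to_map (nonZeroDivisors R) (p i)
  set q : Fin n → Polynomial R :=
    fun i => IsLocalization.integerNormalization (nonZeroDivisors R) (p i) with hq
  -- generic data over each localization
  let ψv : ∀ f : R, Fin n → Polynomial (Localization.Away f) := fun f i =>
    C (Ring.inverse (algebraMap R (Localization.Away f) (bb i : R))) *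
      (q i).map (algebraMap R (Localization.Away f))
  let ζf : ∀ f : R, Localization.Away f ⊗[R] S := fun f =>
    Ring.inverse (algebraMap R (Localization.Away f) (b₂ : R)) ⊗ₜ[R] s₀
  let V : ∀ f : R, Polynomial (Localization.Away f) →ₐ[Localization.Away f]
      (Localization.Away f ⊗[R] S) := fun f => aeval (ζf f)
  have hKinj : Function.Injective (algebraMap R (FractionRing R)) :=
    IsFractionRing.injective R (FractionRing R)
  let uK : ∀ f : R, f ≠ 0 → IsUnit (algebraMap R (FractionRing R) f) := fun f hf =>
    IsLocalization.map_units (FractionRing R) ⟨f, mem_nonZeroDivisors_of_ne_zero hf⟩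
  let ρ : ∀ f : R, f ≠ 0 → (Localization.Away f →ₐ[R] FractionRing R) := fun f hf =>
    awayAlgHom f (uK f hf)
  let τ : ∀ f : R, f ≠ 0 → (Localization.Away f ⊗[R] S →ₐ[R] FractionRing R ⊗[R] S) :=
    fun f hf => Algebra.TensorProduct.map (ρ f hf) (AlgHom.id R S)
  have hτ_tmul : ∀ (f : R) (hf : f ≠ 0) (s : S),
      τ f hf ((1 : Localization.Away f) ⊗ₜ[R] s) = (1 : FractionRing R) ⊗ₜ[R] s := by
    intro f hf s
    simp [τ]
  -- (1) τ ∘ V = e.symm ∘ map ρ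
  have hτV : ∀ (f : R) (hf : f ≠ 0)
      (hb2 : IsUnit (algebraMap R (Localization.Away f) (b₂ : R)))
      (pp : Polynomial (Localization.Away f)),
      τ f hf (V f pp) = e.symm (pp.map (ρ f hf).toRingHom) := by
    intro f hf hb2 pp
    have hcomp : (τ f hf).toRingHom.comp (V f).toRingHom =
        (e.symm.toAlgHom.toRingHom).comp (mapRingHom (ρ f hf).toRingHom) := by
      apply Polynomial.ringHom_ext
      · intro a
        show τ f hf (V f (C a)) = e.symm ((mapRingHom (ρ f hf).toRingHom) (C a))
        rw [show (V f) (C a) = algebraMap (Localization.Away f) _ a from aeval_C _ a]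
        rw [coe_mapRingHom, Polynomial.map_C]
        rw [show (C ((ρ f hf).toRingHom a) : Polynomial (FractionRing R)) =
          algebraMap (FractionRing R) (Polynomial (FractionRing R)) ((ρ f hf) a) from rfl]
        rw [AlgEquiv.commutes]
        simp [τ, Algebra.TensorProduct.algebraMap_apply]
      · show τ f hf (V f X) = e.symm ((mapRingHom (ρ f hf).toRingHom) X)
        rw [show (V f) X = ζf f from aeval_X _, coe_mapRingHom, Polynomial.map_X]
        have h1 : τ f hf (ζf f) =
            Ring.inverse (algebraMap R (FractionRing R) (b₂ : R)) ⊗ₜ[R] s₀ := by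
          simp only [τ, ζf, Algebra.TensorProduct.map_tmul, AlgHom.coe_id, id_eq]
          congr 1
          rw [show ((ρ f hf) (Ring.inverse (algebraMap R (Localization.Away f) (b₂ : R)))) =
            (ρ f hf).toRingHom (Ring.inverse (algebraMap R (Localization.Away f) (b₂ : R)))
            from rfl]
          rw [ringHom_ring_inverse _ hb2]
          congr 1
          exact awayAlgHom_algebraMap f (uK f hf) (b₂ : R)
        rw [h1]
        have hbK : IsUnit (algebraMap R (FractionRing R) (b₂ : R)) :=
          IsLocalization.map_units (FractionRing R) b₂
        calc Ring.inverse (algebraMap R (FractionRing R) (b₂ : R)) ⊗ₜ[R] s₀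
            = Ring.inverse (algebraMap R (FractionRing R) (b₂ : R)) •
              ((1 : FractionRing R) ⊗ₜ[R] s₀) := by
              rw [TensorProduct.smul_tmul', smul_eq_mul, mul_one]
          _ = Ring.inverse (algebraMap R (FractionRing R) (b₂ : R)) •
              ((b₂ : R) • e.symm X) := by rw [hs₀']
          _ = Ring.inverse (algebraMap R (FractionRing R) (b₂ : R)) •
              ((algebraMap R (FractionRing R) (b₂ : R)) • e.symm X) := by
              rw [algebraMap_smul]
          _ = e.symm X := by
              rw [smul_smul, Ring.inverse_mul_cancel _ hbK, one_smul]
    exact RingHom.congr_fun hcomp pp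
  -- (0) map ρ (ψv f i) = p i
  have hmapψ : ∀ (f : R) (hf : f ≠ 0)
      (hbu : ∀ i, IsUnit (algebraMap R (Localization.Away f) (bb i : R))) (i : Fin n),
      (ψv f i).map (ρ f hf).toRingHom = p i := by
    intro f hf hbu i
    show (C (Ring.inverse (algebraMap R (Localization.Away f) (bb i : R))) *
        (q i).map (algebraMap R (Localization.Away f))).map (ρ f hf).toRingHom = p i
    rw [Polynomial.map_mul, Polynomial.map_C, Polynomial.map_map]
    have h1 : (ρ f hf).toRingHom.comp (algebraMap R (Localization.Away f)) =
        algebraMap R (FractionRing R) := by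
      ext r
      exact awayAlgHom_algebraMap f (uK f hf) r
    rw [h1]
    rw [show (q i).map (algebraMap R (FractionRing R)) = (bb i : R) • p i from hbb i]
    rw [ringHom_ring_inverse _ (hbu i)]
    rw [show (ρ f hf).toRingHom (algebraMap R (Localization.Away f) (bb i : R)) =
      algebraMap R (FractionRing R) (bb i : R) from awayAlgHom_algebraMap f (uK f hf) _]
    have hbK : IsUnit (algebraMap R (FractionRing R) (bb i : R)) :=
      IsLocalization.map_units (FractionRing R) (bb i)
    rw [← algebraMap_smul (FractionRing R) (bb i : R) (p i), Polynomial.smul_eq_C_mul,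
      ← mul_assoc, ← C_mul, Ring.inverse_mul_cancel _ hbK, C_1, one_mul]
  -- (2)
  have hτVψ : ∀ (f : R) (hf : f ≠ 0)
      (hbu : ∀ i, IsUnit (algebraMap R (Localization.Away f) (bb i : R)))
      (hb2 : IsUnit (algebraMap R (Localization.Away f) (b₂ : R))) (i : Fin n),
      τ f hf (V f (ψv f i)) = (1 : FractionRing R) ⊗ₜ[R] φ (MvPolynomial.X i) := by
    intro f hf hbu hb2 i
    rw [hτV f hf hb2, hmapψ f hf hbu i, hp]
    exact e.symm_apply_apply _
  -- the denominators
  have hb2ne : (b₂ : R) ≠ 0 := nonZeroDivisors.coe_ne_zero b₂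
  set F₀ : R := (∏ i, (bb i : R)) * (b₂ : R) with hF₀def
  have hF₀ : F₀ ≠ 0 := mul_ne_zero
    (Finset.prod_ne_zero_iff.mpr fun i _ => nonZeroDivisors.coe_ne_zero _) hb2ne
  have hbuF₀ : ∀ i, IsUnit (algebraMap R (Localization.Away F₀) (bb i : R)) := fun i =>
    IsLocalization.Away.isUnit_of_dvd (x := F₀)
      (dvd_mul_of_dvd_left (Finset.dvd_prod_of_mem _ (Finset.mem_univ i)) _)
  have hb2F₀ : IsUnit (algebraMap R (Localization.Away F₀) (b₂ : R)) :=
    IsLocalization.Away.isUnit_of_dvd (x := F₀) (dvd_mul_left _ _)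
  haveI hF₀S : IsLocalizedModule (Submonoid.powers F₀)
      (TensorProduct.mk R (Localization.Away F₀) S 1) :=
    (isLocalizedModule_iff_isBaseChange (Submonoid.powers F₀) (Localization.Away F₀) _).mpr
      (TensorProduct.isBaseChange R S (Localization.Away F₀))
  set z : Fin n → Localization.Away F₀ ⊗[R] S := fun i =>
    V F₀ (ψv F₀ i) - (1 : Localization.Away F₀) ⊗ₜ[R] φ (MvPolynomial.X i) with hzdef
  have hτz : ∀ i, τ F₀ hF₀ (z i) = 0 := by
    intro i
    show τ F₀ hF₀ (V F₀ (ψv F₀ i) - (1 : Localization.Away F₀) ⊗ₜ[R] φ (MvPolynomial.X i)) = 0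
    rw [map_sub, hτVψ F₀ hF₀ hbuF₀ hb2F₀ i, hτ_tmul F₀ hF₀, sub_self]
  have hsurjz := fun i => IsLocalizedModule.surj (Submonoid.powers F₀)
    (TensorProduct.mk R (Localization.Away F₀) S 1) (z i)
  choose wpair hwm using hsurjz
  have hwK : ∀ i, (TensorProduct.mk R (FractionRing R) S 1) (wpair i).1 = 0 := by
    intro i
    have h2 := congrArg (τ F₀ hF₀) (hwm i)
    rw [Submonoid.smul_def, map_smul, hτz i, smul_zero] at h2
    rw [show (TensorProduct.mk R (Localization.Away F₀) S 1) (wpair i).1 =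
      (1 : Localization.Away F₀) ⊗ₜ[R] (wpair i).1 from rfl, hτ_tmul F₀ hF₀] at h2
    exact h2.symm
  have hwzero : ∀ i, ∃ c : nonZeroDivisors R, c • (wpair i).1 = 0 := fun i =>
    (IsLocalizedModule.eq_zero_iff (nonZeroDivisors R)
      (TensorProduct.mk R (FractionRing R) S 1)).mp (hwK i)
  choose cc hcc using hwzero
  refine ⟨F₀ * ∏ i, (cc i : R), ?_, ?_⟩
  · exact mul_ne_zero hF₀
      (Finset.prod_ne_zero_iff.mpr fun i _ => nonZeroDivisors.coe_ne_zero _)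
  set F : R := F₀ * ∏ i, (cc i : R) with hFdef
  have hF : F ≠ 0 := mul_ne_zero hF₀
      (Finset.prod_ne_zero_iff.mpr fun i _ => nonZeroDivisors.coe_ne_zero _)
  have hdvdF : ∀ x : R, x ∣ F₀ → IsUnit (algebraMap R (Localization.Away F) x) := fun x hx =>
    IsLocalization.Away.isUnit_of_dvd (x := F) (hx.trans (dvd_mul_right _ _))
  have hbuF : ∀ i, IsUnit (algebraMap R (Localization.Away F) (bb i : R)) := fun i =>
    hdvdF _ (dvd_mul_of_dvd_left (Finset.dvd_prod_of_mem _ (Finset.mem_univ i)) _)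
  have hb2F : IsUnit (algebraMap R (Localization.Away F) (b₂ : R)) :=
    hdvdF _ (dvd_mul_left _ _)
  have hF₀F : IsUnit (algebraMap R (Localization.Away F) F₀) := hdvdF _ dvd_rfl
  have hccF : ∀ i, IsUnit (algebraMap R (Localization.Away F) (cc i : R)) := fun i =>
    IsLocalization.Away.isUnit_of_dvd (x := F)
      (dvd_mul_of_dvd_right (Finset.dvd_prod_of_mem _ (Finset.mem_univ i)) _)
  -- transition map
  let g : Localization.Away F₀ →ₐ[R] Localization.Away F := awayAlgHom F₀ hF₀F
  let μ : Localization.Away F₀ ⊗[R] S →ₐ[R] Localization.Away F ⊗[R] S :=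
    Algebra.TensorProduct.map g (AlgHom.id R S)
  have hμV : ∀ pp : Polynomial (Localization.Away F₀),
      μ (V F₀ pp) = V F (pp.map g.toRingHom) := by
    have hcomp : μ.toRingHom.comp (V F₀).toRingHom =
        (V F).toRingHom.comp (mapRingHom g.toRingHom) := by
      apply Polynomial.ringHom_ext
      · intro a
        show μ (V F₀ (C a)) = V F ((mapRingHom g.toRingHom) (C a))
        rw [show (V F₀) (C a) = algebraMap _ _ a from aeval_C _ a, coe_mapRingHom,
          Polynomial.map_C,
          show (V F) (C (g.toRingHom a)) = algebraMap _ _ (g.toRingHom a) from aeval_C _ _]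
        simp [μ, Algebra.TensorProduct.algebraMap_apply]
      · show μ (V F₀ X) = V F ((mapRingHom g.toRingHom) X)
        rw [show (V F₀) X = ζf F₀ from aeval_X _, coe_mapRingHom, Polynomial.map_X,
          show (V F) X = ζf F from aeval_X _]
        show μ (ζf F₀) = ζf F
        simp only [μ, ζf, Algebra.TensorProduct.map_tmul, AlgHom.coe_id, id_eq]
        congr 1
        rw [show g (Ring.inverse (algebraMap R (Localization.Away F₀) (b₂ : R))) =
          g.toRingHom (Ring.inverse (algebraMap R (Localization.Away F₀) (b₂ : R))) from rfl,
          ringHom_ring_inverse _ hb2F₀]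
        congr 1
        exact awayAlgHom_algebraMap F₀ hF₀F _
    exact fun pp => RingHom.congr_fun hcomp pp
  have hψF : ∀ i, (ψv F₀ i).map g.toRingHom = ψv F i := by
    intro i
    show (C (Ring.inverse (algebraMap R (Localization.Away F₀) (bb i : R))) *
      (q i).map (algebraMap R (Localization.Away F₀))).map g.toRingHom = _
    rw [Polynomial.map_mul, Polynomial.map_C, Polynomial.map_map]
    have h1 : g.toRingHom.comp (algebraMap R (Localization.Away F₀)) =
        algebraMap R (Localization.Away F) := by
      ext r
      exact awayAlgHom_algebraMap F₀ hF₀F r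
    rw [h1, ringHom_ring_inverse _ (hbuF₀ i),
      show g.toRingHom (algebraMap R (Localization.Away F₀) (bb i : R)) =
        algebraMap R (Localization.Away F) (bb i : R) from awayAlgHom_algebraMap F₀ hF₀F _]
  have key : ∀ i, V F (ψv F i) = (1 : Localization.Away F) ⊗ₜ[R] φ (MvPolynomial.X i) := by
    intro i
    have hμz : μ (z i) = 0 := by
      have h2 := congrArg μ (hwm i)
      rw [Submonoid.smul_def, map_smul] at h2
      have h3 : μ ((TensorProduct.mk R (Localization.Away F₀) S 1) (wpair i).1) =
          (1 : Localization.Away F) ⊗ₜ[R] (wpair i).1 := by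
        simp [μ]
      rw [h3] at h2
      have h4 : (1 : Localization.Away F) ⊗ₜ[R] (wpair i).1 = 0 := by
        have h5 : (cc i : R) • ((1 : Localization.Away F) ⊗ₜ[R] (wpair i).1) = 0 := by
          rw [← TensorProduct.tmul_smul,
            show (cc i : R) • (wpair i).1 = 0 from by
              rw [← Submonoid.smul_def]; exact hcc i,
            TensorProduct.tmul_zero]
        exact smul_eq_zero_of_isUnit_algebraMap (hccF i) h5
      rw [h4] at h2
      have hmu : IsUnit (algebraMap R (Localization.Away F) ((wpair i).2 : R)) := by
        obtain ⟨k, hk⟩ := (wpair i).2.2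
        rw [← hk, map_pow]
        exact hF₀F.pow k
      exact smul_eq_zero_of_isUnit_algebraMap hmu h2
    have h6 := hμV (ψv F₀ i)
    rw [hψF i] at h6
    rw [← h6]
    have hsplit : V F₀ (ψv F₀ i) =
        (1 : Localization.Away F₀) ⊗ₜ[R] φ (MvPolynomial.X i) + z i := by
      rw [hzdef]
      simp
    rw [hsplit, map_add, hμz, add_zero]
    simp [μ]
  -- surjectivity
  haveI hFS : IsLocalizedModule (Submonoid.powers F)
      (TensorProduct.mk R (Localization.Away F) S 1) :=
    (isLocalizedModule_iff_isBaseChange (Submonoid.powers F) (Localization.Away F) _).mpr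
      (TensorProduct.isBaseChange R S (Localization.Away F))
  have hrange : ∀ s : S, (1 : Localization.Away F) ⊗ₜ[R] s ∈ (V F).range := by
    intro s
    have hadj : Algebra.adjoin R (Set.range fun i => φ (MvPolynomial.X i)) = ⊤ := by
      rw [show (Set.range fun i => φ (MvPolynomial.X i)) =
        φ '' Set.range MvPolynomial.X from by rw [← Set.range_comp]; rfl]
      rw [← AlgHom.map_adjoin, MvPolynomial.adjoin_range_X, Algebra.map_top]
      exact (AlgHom.range_eq_top φ).mpr hφ
    have hsub : Algebra.adjoin R (Set.range fun i => φ (MvPolynomial.X i)) ≤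
        Subalgebra.comap
          (Algebra.TensorProduct.includeRight : S →ₐ[R] Localization.Away F ⊗[R] S)
          ((V F).range.restrictScalars R) := by
      apply Algebra.adjoin_le
      rintro _ ⟨i, rfl⟩
      simp only [SetLike.mem_coe, Subalgebra.mem_comap, Subalgebra.mem_restrictScalars]
      exact ⟨ψv F i, key i⟩
    have hst : s ∈ (⊤ : Subalgebra R S) := Algebra.mem_top
    rw [← hadj] at hst
    exact hsub hst
  have hVsurj : Function.Surjective (V F) := by
    intro zz
    obtain ⟨⟨s, m⟩, hm⟩ := IsLocalizedModule.surj (Submonoid.powers F)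
      (TensorProduct.mk R (Localization.Away F) S 1) zz
    obtain ⟨pp, hpp⟩ := hrange s
    have hmu : IsUnit (algebraMap R (Localization.Away F) (m : R)) := by
      obtain ⟨k, hk⟩ := m.2
      rw [← hk, map_pow]
      exact (IsLocalization.Away.algebraMap_isUnit F).pow k
    have hpp' : V F pp = (1 : Localization.Away F) ⊗ₜ[R] s := hpp
    refine ⟨Ring.inverse (algebraMap R (Localization.Away F) (m : R)) • pp, ?_⟩
    rw [map_smul, hpp',
      show (1 : Localization.Away F) ⊗ₜ[R] s = (m : R) • zz from by
        rw [Submonoid.smul_def] at hm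
        exact hm.symm,
      ← algebraMap_smul (Localization.Away F) (m : R) zz, smul_smul,
      Ring.inverse_mul_cancel _ hmu, one_smul]
  have hVinj : Function.Injective (V F) := by
    have hρinj : Function.Injective (ρ F hF) := awayAlgHom_injective F _ hKinj
    intro p1 p2 h12
    have h13 : τ F hF (V F p1) = τ F hF (V F p2) := by rw [h12]
    rw [hτV F hF hb2F p1, hτV F hF hb2F p2] at h13
    exact Polynomial.map_injective _ hρinj (e.symm.injective h13)
  exact ⟨(AlgEquiv.ofBijective (V F) ⟨hVinj, hVsurj⟩).symm⟩
end

section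
/- Let R be an integral domain with fraction field K, let S be a finitely presented R-algebra, and let 𝔭 be a finitely generated ideal of K ⊗_R S. Then there exists a nonzero f ∈ R and a finitely generated ideal 𝔮 of R_f ⊗_R S such that 𝔭 is generated by the image of 𝔮 in K ⊗_R S. -/
open scoped TensorProduct

/-- Let `R` be an integral domain with fraction field `K`, `S` a finitely presented
`R`-algebra, and `𝔭` a finitely generated ideal of `K ⊗[R] S`. Then there are a
nonzero `f ∈ R` and a finitely generated ideal `𝔮` of `R_f ⊗[R] S` whose image
generates `𝔭` (the image being taken along the canonical map
`R_f ⊗[R] S → K ⊗[R] S`, induced by the unique `R`-algebra map `R_f → K`). -/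
theorem stmt_12 (R : Type*) [CommRing R] [IsDomain R]
    (S : Type*) [CommRing S] [Algebra R S]
    (hfp : Algebra.FinitePresentation R S)
    (p : Ideal (FractionRing R ⊗[R] S)) (hp : p.FG) :
    ∃ f : R, f ≠ 0 ∧
      ∃ q : Ideal (Localization.Away f ⊗[R] S), q.FG ∧
        ∀ g : Localization.Away f →ₐ[R] FractionRing R,
          Ideal.map (Algebra.TensorProduct.map g (AlgHom.id R S)) q = p := by
  classical
  set K := FractionRing R
  obtain ⟨s, hs⟩ := hp
  have hloc : IsLocalizedModule (nonZeroDivisors R) (TensorProduct.mk R K S 1) :=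
    (isLocalizedModule_iff_isBaseChange (nonZeroDivisors R) K _).mpr
      (TensorProduct.isBaseChange R S K)
  choose a ha using fun x : {x // x ∈ s} =>
    IsLocalizedModule.surj (S := nonZeroDivisors R) (TensorProduct.mk R K S 1) x.1
  -- common denominator
  set f : R := ∏ x ∈ s.attach, ((a x).2 : R) with hf
  have hf0 : f ∈ nonZeroDivisors R := by
    exact Submonoid.prod_mem _ fun x _ => (a x).2.2
  have hfne : f ≠ 0 := nonZeroDivisors.ne_zero hf0
  -- for each x ∈ s, there's y x : S with f • x = 1 ⊗ y x
  have key : ∀ x : {x // x ∈ s}, ∃ ys : S, (algebraMap R K f) • x.1 = (1 : K) ⊗ₜ[R] ys := by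
    intro x
    obtain ⟨c, hc⟩ : ((a x).2 : R) ∣ f := Finset.dvd_prod_of_mem _ (Finset.mem_attach _ x)
    refine ⟨c • (a x).1, ?_⟩
    have h1 := ha x
    simp only [TensorProduct.mk_apply, Submonoid.smul_def] at h1
    rw [algebraMap_smul, hc, mul_comm, mul_smul, h1, TensorProduct.tmul_smul]
  choose y hy using key
  refine ⟨f, hfne, ?_⟩
  set u : Localization.Away f :=
    IsLocalization.mk' (Localization.Away f) (1 : R) ⟨f, Submonoid.mem_powers f⟩ with hu
  set T : Finset (Localization.Away f ⊗[R] S) :=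
    s.attach.image (fun x => u ⊗ₜ[R] y x) with hT
  refine ⟨Ideal.span (T : Set _), ⟨T, rfl⟩, fun g => ?_⟩
  have hgu : g u * algebraMap R K f = 1 := by
    have h2 : u * algebraMap R (Localization.Away f) f = 1 := by
      rw [hu, IsLocalization.mk'_spec, map_one]
    calc g u * algebraMap R K f = g u * g (algebraMap R (Localization.Away f) f) := by
          rw [g.commutes]
      _ = g (u * algebraMap R (Localization.Away f) f) := (map_mul g _ _).symm
      _ = 1 := by rw [h2, map_one]
  have himg : ∀ x : {x // x ∈ s},
      Algebra.TensorProduct.map g (AlgHom.id R S) (u ⊗ₜ[R] y x) = x.1 := by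
    intro x
    calc Algebra.TensorProduct.map g (AlgHom.id R S) (u ⊗ₜ[R] y x)
        = g u ⊗ₜ[R] y x := by simp
      _ = g u • ((1 : K) ⊗ₜ[R] y x) := by
          rw [TensorProduct.smul_tmul', smul_eq_mul, mul_one]
      _ = g u • (algebraMap R K f • x.1) := by rw [hy x]
      _ = (g u * algebraMap R K f) • x.1 := (mul_smul _ _ _).symm
      _ = x.1 := by rw [hgu, one_smul]
  rw [Ideal.map_span, ← hs]
  congr 1
  rw [hT, Finset.coe_image, Set.image_image]
  have : (fun x : {x // x ∈ s} =>
      Algebra.TensorProduct.map g (AlgHom.id R S) (u ⊗ₜ[R] y x)) = fun x => x.1 :=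
    funext himg
  rw [this]
  ext z
  simp
end

section
/- Let Γ be a finite group acting on the finite set [n] = {1,...,n}, and let F([n]) denote the set of flags I_• = (I_ℓ ⊊ ... ⊊ I_1 ⊊ I_0 = [n]) of subsets of [n] (of arbitrary length ℓ ≥ 0). Define on the polynomial ring ℤ[q]: for the decomposition of [n] into Γ-orbits with λ_i orbits of size i, set Q_λ(q) = Π_i (q^i − 1)^{λ_i}. Then Σ over Γ-fixed flags I_• in F([n]) of (−1)^{ℓ(I_•)} q^{|I_max|} equals Q_λ(q), where I_max is the smallest (last) subset of the flag and ℓ(I_•) its length. -/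
/-!
A `Γ`-invariant subset of `X` is a union of orbits, so the `Γ`-fixed flags of `X` are the flags
of the orbit set `Ω`, with the size of a member `S` read as `∑ ω ∈ S, |ω|`. It therefore suffices
to show that, for a finite set `U` and weights `a`, the sum over chains `C` of proper subsets of
`U` of `(-1) ^ #C * ∏ y ∈ min (C ∪ {U}), a y` is `∏ y ∈ U, (a y - 1)`. Splitting off the largest
member `M ⊂ U` of a nonempty chain gives the recursion `S(U) = ∏ y ∈ U, a y - ∑ M ⊂ U, S(M)`,
which `∏ y ∈ U, (a y - 1)` satisfies too, because `∏ y ∈ U, a y = ∑ M ⊆ U, ∏ y ∈ M, (a y - 1)`.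
-/

open Classical

open Finset MulAction

theorem Finset.sup_mem_of_isChain {α : Type*} [SemilatticeSup α] [OrderBot α] {C : Finset α}
    (hC : IsChain (· ≤ ·) (C : Set α)) (hne : C.Nonempty) : C.sup id ∈ C := by
  rw [← sup'_eq_sup hne]
  refine sup'_mem (C : Set α) (fun x hx y hy => ?_) C hne id fun A hA => hA
  rcases hC.total hx hy with h | h
  · rwa [sup_eq_right.2 h]
  · rwa [sup_eq_left.2 h]

section ProperChains

variable {Y : Type*} [DecidableEq Y]

noncomputable def properChains (U : Finset Y) : Finset (Finset (Finset Y)) :=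
  U.ssubsets.powerset.filter fun C => IsChain (· ⊆ ·) (C : Set (Finset Y))

theorem mem_properChains {U : Finset Y} {C : Finset (Finset Y)} :
    C ∈ properChains U ↔ (∀ A ∈ C, A ⊂ U) ∧ IsChain (· ⊆ ·) (C : Set (Finset Y)) := by
  simp only [properChains, mem_filter, mem_powerset, subset_iff, mem_ssubsets]

theorem empty_mem_properChains (U : Finset Y) : ∅ ∈ properChains U :=
  mem_properChains.2 ⟨by simp, by simp⟩

theorem insert_mem_properChains {U M : Finset Y} {D : Finset (Finset Y)} (hM : M ⊂ U)
    (hD : D ∈ properChains M) : insert M D ∈ properChains U := by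
  rw [mem_properChains] at hD ⊢
  refine ⟨?_, ?_⟩
  · simp only [mem_insert, forall_eq_or_imp]
    exact ⟨hM, fun A hA => (hD.1 A hA).trans hM⟩
  · rw [coe_insert]
    exact hD.2.insert fun A hA _ => Or.inr (hD.1 A hA).subset

theorem notMem_of_mem_properChains {M : Finset Y} {D : Finset (Finset Y)}
    (hD : D ∈ properChains M) : M ∉ D :=
  fun h => (mem_properChains.1 hD).1 M h |>.ne rfl

theorem sup_insert_of_mem_properChains {M : Finset Y} {D : Finset (Finset Y)}
    (hD : D ∈ properChains M) : (insert M D).sup id = M := by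
  rw [sup_insert, id, sup_eq_left]
  exact Finset.sup_le fun A hA => ((mem_properChains.1 hD).1 A hA).subset

theorem sum_properChains {M : Type*} [AddCommMonoid M] (U : Finset Y)
    (f : Finset (Finset Y) → M) :
    ∑ C ∈ properChains U, f C =
      f ∅ + ∑ M ∈ U.ssubsets, ∑ D ∈ properChains M, f (insert M D) := by
  rw [← add_sum_erase _ _ (empty_mem_properChains U), sum_sigma']
  congr 1
  have top_mem {C} (hC : C ∈ (properChains U).erase ∅) : C.sup id ∈ C := by
    obtain ⟨hne, hC⟩ := mem_erase.1 hC
    exact sup_mem_of_isChain (mem_properChains.1 hC).2 (nonempty_iff_ne_empty.2 hne)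
  refine sum_bij' (fun C _ => ⟨C.sup id, C.erase (C.sup id)⟩) (fun p _ => insert p.1 p.2)
    (fun C hC => ?_) (fun p hp => ?_) (fun C hC => insert_erase (top_mem hC))
    (fun p hp => ?_) (fun C hC => by rw [insert_erase (top_mem hC)])
  · have hC_top := top_mem hC
    obtain ⟨-, hC⟩ := mem_erase.1 hC
    rw [mem_properChains] at hC
    refine mem_sigma.2 ⟨mem_ssubsets.2 (hC.1 _ hC_top), mem_properChains.2 ⟨?_, ?_⟩⟩
    · intro A hA
      exact (le_sup (f := id) (mem_of_mem_erase hA)).lt_of_ne (ne_of_mem_erase hA)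
    · exact hC.2.mono (by simp)
  · obtain ⟨hM, hD⟩ := mem_sigma.1 hp
    exact mem_erase.2 ⟨(insert_nonempty _ _).ne_empty,
      insert_mem_properChains (mem_ssubsets.1 hM) hD⟩
  · obtain ⟨-, hD⟩ := mem_sigma.1 hp
    simp only [sup_insert_of_mem_properChains hD, erase_insert (notMem_of_mem_properChains hD)]

theorem sum_properChains_neg_one_pow_mul_prod_inf {R : Type*} [CommRing R] (a : Y → R)
    (U : Finset Y) :
    ∑ C ∈ properChains U, (-1 : R) ^ #C * ∏ y ∈ (insert U C).inf' (insert_nonempty U C) id, a y =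
      ∏ y ∈ U, (a y - 1) := by
  induction U using Finset.strongInduction with
  | H U ih =>
  have below (M) (hM : M ∈ U.ssubsets) :
      ∑ D ∈ properChains M, (-1 : R) ^ #(insert M D) *
          ∏ y ∈ (insert U (insert M D)).inf' (insert_nonempty _ _) id, a y =
        -∏ y ∈ M, (a y - 1) := by
    rw [← ih M (mem_ssubsets.1 hM), ← sum_neg_distrib]
    refine sum_congr rfl fun D hD => ?_
    have hinf : (insert U (insert M D)).inf' (insert_nonempty _ _) id =
        (insert M D).inf' (insert_nonempty _ _) id := by
      rw [inf'_insert, id, inf_eq_right]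
      exact (inf'_le id (mem_insert_self M D)).trans (mem_ssubsets.1 hM).subset
    rw [hinf, card_insert_of_notMem (notMem_of_mem_properChains hD), pow_succ]
    ring
  have expand : ∏ y ∈ U, a y = ∏ y ∈ U, (a y - 1) + ∑ M ∈ U.ssubsets, ∏ y ∈ M, (a y - 1) := by
    rw [ssubsets, Finset.add_sum_erase _ (fun M => ∏ y ∈ M, (a y - 1)) (mem_powerset_self U),
      ← prod_add_one]
    simp only [sub_add_cancel]
  rw [sum_properChains, sum_congr rfl below, sum_neg_distrib]
  simp only [card_empty, pow_zero, one_mul, insert_empty, inf'_singleton, id]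
  linear_combination expand

end ProperChains

section OrbitUnion

variable {Γ X : Type*} [Group Γ] [MulAction Γ X] [Fintype X]

noncomputable def orbitUnion (S : Finset (orbitRel.Quotient Γ X)) : Finset X :=
  univ.filter fun x => Quotient.mk'' x ∈ S

theorem mem_orbitUnion {S : Finset (orbitRel.Quotient Γ X)} {x : X} :
    x ∈ orbitUnion S ↔ Quotient.mk'' x ∈ S := by
  simp [orbitUnion]

theorem smul_mem_orbitUnion {S : Finset (orbitRel.Quotient Γ X)} (γ : Γ) {x : X}
    (hx : x ∈ orbitUnion S) : γ • x ∈ orbitUnion S := by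
  rw [mem_orbitUnion] at hx ⊢
  rwa [Quotient.sound' (mem_orbit x γ)]

theorem image_orbitUnion (S : Finset (orbitRel.Quotient Γ X)) :
    (orbitUnion S).image Quotient.mk'' = S := by
  ext ω
  induction ω using Quotient.inductionOn'
  simp only [mem_image, mem_orbitUnion]
  exact ⟨fun ⟨y, hy, hyx⟩ => hyx ▸ hy, fun h => ⟨_, h, rfl⟩⟩

theorem orbitUnion_image {A : Finset X} (hA : ∀ γ : Γ, ∀ x ∈ A, γ • x ∈ A) :
    orbitUnion (A.image (Quotient.mk'' : X → orbitRel.Quotient Γ X)) = A := by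
  ext x
  simp only [mem_orbitUnion, mem_image]
  refine ⟨fun ⟨y, hy, hyx⟩ => ?_, fun hx => ⟨x, hx, rfl⟩⟩
  obtain ⟨γ, rfl⟩ := Quotient.exact' hyx.symm
  exact hA γ y hy

theorem orbitUnion_subset_orbitUnion {S T : Finset (orbitRel.Quotient Γ X)} :
    orbitUnion S ⊆ orbitUnion T ↔ S ⊆ T := by
  refine ⟨fun h => ?_, fun h x => by simpa only [mem_orbitUnion] using @h _⟩
  rw [← image_orbitUnion S, ← image_orbitUnion T]
  exact image_subset_image h

theorem orbitUnion_ssubset_orbitUnion {S T : Finset (orbitRel.Quotient Γ X)} :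
    orbitUnion S ⊂ orbitUnion T ↔ S ⊂ T := by
  simp only [ssubset_iff_subset_not_subset, orbitUnion_subset_orbitUnion]

theorem orbitUnion_injective : Function.Injective (orbitUnion (Γ := Γ) (X := X)) :=
  fun S T h => by rw [← image_orbitUnion S, h, image_orbitUnion]

theorem orbitUnion_univ : orbitUnion (univ : Finset (orbitRel.Quotient Γ X)) = univ := by
  ext x
  simp [mem_orbitUnion]

theorem orbitUnion_ssubset_univ {S : Finset (orbitRel.Quotient Γ X)} :
    orbitUnion S ⊂ univ ↔ S ⊂ univ := by
  rw [← orbitUnion_univ (Γ := Γ), orbitUnion_ssubset_orbitUnion]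

theorem orbitUnion_inf' {D : Finset (Finset (orbitRel.Quotient Γ X))} (hD : D.Nonempty) :
    orbitUnion (D.inf' hD id) = (D.image orbitUnion).inf' (hD.image _) id := by
  rw [inf'_image, apply_inf'_eq_inf'_comp hD orbitUnion fun S T => ?_]
  · rfl
  · ext x
    simp [mem_orbitUnion]

theorem card_orbitUnion (S : Finset (orbitRel.Quotient Γ X)) :
    #(orbitUnion S) = ∑ ω ∈ S, Nat.card ω.orbit := by
  rw [card_eq_sum_card_fiberwise fun x hx => mem_orbitUnion.1 hx]
  refine sum_congr rfl fun ω hω => ?_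
  rw [Nat.card_eq_card_toFinset]
  congr 1
  ext x
  simp only [mem_filter, mem_orbitUnion, Set.mem_toFinset, orbitRel.Quotient.mem_orbit]
  exact ⟨And.right, fun h => ⟨h ▸ hω, h⟩⟩

end OrbitUnion

/-- A flag `I_ℓ ⊊ ⋯ ⊊ I_1 ⊊ I_0 = X` is encoded by the chain `C = {I_1, …, I_ℓ}` of its proper
members. -/
theorem stmt_13_general (Γ : Type*) [Group Γ] (X : Type*) [Fintype X]
    [MulAction Γ X] :
    (∑ C ∈ Finset.univ.filter (fun C : Finset (Finset X) =>
        (∀ A ∈ C, A ⊂ Finset.univ) ∧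
        IsChain (· ⊆ ·) (C : Set (Finset X)) ∧
        (∀ A ∈ C, ∀ γ : Γ, ∀ x ∈ A, γ • x ∈ A)),
      (-1 : Polynomial ℤ) ^ C.card *
        Polynomial.X ^ (((insert Finset.univ C).inf id).card)) =
      ∏ᶠ ω : MulAction.orbitRel.Quotient Γ X,
        (Polynomial.X ^ (Nat.card ω.orbit) - 1) := by
  rw [finprod_eq_prod_of_fintype, ← sum_properChains_neg_one_pow_mul_prod_inf
    (fun ω : orbitRel.Quotient Γ X => (Polynomial.X : Polynomial ℤ) ^ Nat.card ω.orbit)]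
  symm
  refine sum_nbij' (image orbitUnion) (image (image Quotient.mk'')) (fun D hD => ?_)
    (fun C hC => ?_) (fun D _ => ?_) (fun C hC => ?_) (fun D hD => ?_)
  · obtain ⟨hsub, hchain⟩ := mem_properChains.1 hD
    simp only [mem_filter, mem_univ, true_and, forall_mem_image]
    refine ⟨fun S hS => orbitUnion_ssubset_univ.2 (hsub S hS), ?_,
      fun S _ γ x hx => smul_mem_orbitUnion γ hx⟩
    rw [coe_image]
    exact hchain.image_of_map_rel _ _ _ fun S T h => orbitUnion_subset_orbitUnion.2 h
  · obtain ⟨hsub, hchain, hinv⟩ := (mem_filter.1 hC).2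
    refine mem_properChains.2 ⟨forall_mem_image.2 fun A hA => ?_, ?_⟩
    · rw [← orbitUnion_ssubset_univ, orbitUnion_image (hinv A hA)]
      exact hsub A hA
    · rw [coe_image]
      exact hchain.image_of_map_rel _ _ _ fun A B h => image_subset_image h
  · rw [image_image]
    exact (image_congr fun S _ => image_orbitUnion S).trans image_id
  · obtain ⟨-, -, hinv⟩ := (mem_filter.1 hC).2
    rw [image_image]
    exact (image_congr fun A hA => orbitUnion_image (hinv A hA)).trans image_id
  · have hinf : (insert univ (D.image orbitUnion)).inf id =
        orbitUnion ((insert univ D).inf' (insert_nonempty _ _) id) := by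
      rw [orbitUnion_inf', inf'_eq_inf, image_insert, orbitUnion_univ]
    rw [card_image_of_injective _ orbitUnion_injective, hinf, card_orbitUnion,
      prod_pow_eq_pow_sum]

/-- Fixed-flag computation over a `Γ`-set: let `Γ` be a finite group acting on a finite
set `X`.  Flags `I_ℓ ⊊ ⋯ ⊊ I_1 ⊊ I_0 = X` are encoded by the chain
`C = {I_1, …, I_ℓ}` of proper subsets (so `ℓ(I_•) = |C|` and `I_max = ⋂ C`).  Then the
sum over all `Γ`-fixed flags of `(-1)^{ℓ(I_•)} q^{|I_max|}` equals
`Q_λ(q) = ∏_{orbits ω} (q^{|ω|} - 1) = ∏_i (q^i - 1)^{λ_i}`, where `λ_i` is the number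
of `Γ`-orbits of size `i`. -/
theorem stmt_13 (Γ : Type*) [Group Γ] [Finite Γ] (X : Type*) [Fintype X]
    [MulAction Γ X] :
    (∑ C ∈ Finset.univ.filter (fun C : Finset (Finset X) =>
        (∀ A ∈ C, A ⊂ Finset.univ) ∧
        IsChain (· ⊆ ·) (C : Set (Finset X)) ∧
        (∀ A ∈ C, ∀ γ : Γ, ∀ x ∈ A, γ • x ∈ A)),
      (-1 : Polynomial ℤ) ^ C.card *
        Polynomial.X ^ (((insert Finset.univ C).inf id).card)) =
      ∏ᶠ ω : MulAction.orbitRel.Quotient Γ X,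
        (Polynomial.X ^ (Nat.card ω.orbit) - 1) :=
  stmt_13_general Γ X
end
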